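/- arXiv:0912.3241 — 2 statements merged into one kernel-verified Lean document; each statement's English description precedes it below -/
import Mathlib

section
/- Let n ≥ 1 be an integer and Q ∈ ℂ[x,z] with deg_z Q(0,z) ≥ 2. Then there exist a polynomial p ∈ ℂ[z] with deg p ≥ 2 and polynomials q_i(x,t) ∈ ℂ[x,t] for 2 ≤ i ≤ deg p, each with deg_x q_i < n − 1, such that the Danielewski hypersurface X_{Q,n} is equivalent to the Danielewski hypersurface defined by the equation x^n y − p(z) − x·Σ_{i=2}^{deg p} p^{(i)}(z)·q_i(x, p(z)) = 0, where p^{(i)} denotes the i-th derivative of p. -/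
open MvPolynomial

noncomputable section

/-- The polynomial ring `ℂ[x,y,z]`, with `X 0 = x`, `X 1 = y`, `X 2 = z`. -/
abbrev R3 := MvPolynomial (Fin 3) ℂ

/-- The polynomial ring `ℂ[x,z]`, with `X 0 = x`, `X 1 = z`. -/
abbrev R2 := MvPolynomial (Fin 2) ℂ

/-- The embedding `ℂ[x,z] → ℂ[x,y,z]`, `x ↦ x`, `z ↦ z`. -/
def toXYZ : R2 →ₐ[ℂ] R3 := aeval ![X 0, X 2]

/-- The defining polynomial `x^n y - Q(x,z)` of the Danielewski hypersurface `X_{Q,n}`. -/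
def danPoly (Q : R2) (n : ℕ) : R3 := X 0 ^ n * X 1 - toXYZ Q

/-- The coordinate ring `S_{Q,n} = ℂ[x,y,z]/(x^n y - Q(x,z))`. -/
abbrev danRing (Q : R2) (n : ℕ) := R3 ⧸ Ideal.span {danPoly Q n}

/-- The quotient projection `ℂ[x,y,z] → S_{Q,n}`. -/
def danProj (Q : R2) (n : ℕ) : R3 →ₐ[ℂ] danRing Q n := Ideal.Quotient.mkₐ ℂ _

/-- `Q(0,z)` as a univariate polynomial in `z`. -/
def Q0 (Q : R2) : Polynomial ℂ := aeval ![0, Polynomial.X] Q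

/-- A derivation is locally nilpotent if every element is killed by some iterate. -/
def IsLND {A : Type*} [CommRing A] [Algebra ℂ A] (δ : Derivation ℂ A A) : Prop :=
  ∀ a : A, ∃ m : ℕ, 1 ≤ m ∧ (⇑δ)^[m] a = 0

/-- Two Danielewski hypersurfaces are equivalent if some algebra automorphism of
`ℂ[x,y,z]` maps the ideal `(x^{n₁} y - Q₁)` onto the ideal `(x^{n₂} y - Q₂)`. -/
def DanEquiv (Q₁ : R2) (n₁ : ℕ) (Q₂ : R2) (n₂ : ℕ) : Prop :=
  ∃ Φ : R3 ≃ₐ[ℂ] R3,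
    Ideal.map Φ.toAlgHom.toRingHom (Ideal.span {danPoly Q₁ n₁}) = Ideal.span {danPoly Q₂ n₂}

/-- `X_{Q,n}` is in standard form if `Q = p(z) + x q(x,z)` with `deg_z q < deg p`. -/
def IsStandardForm (Q : R2) : Prop :=
  ∃ (p : Polynomial ℂ) (q : R2),
    Q = Polynomial.aeval (X 1) p + X 0 * q ∧ (q = 0 ∨ degreeOf 1 q < p.natDegree)

/-- `X_{Q,n}` is in reduced standard form if moreover `deg_x Q < n` and
`deg_z q < deg p - 1`. -/
def IsReducedStandardForm (Q : R2) (n : ℕ) : Prop :=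
  degreeOf 0 Q < n ∧
  ∃ (p : Polynomial ℂ) (q : R2),
    Q = Polynomial.aeval (X 1) p + X 0 * q ∧ (q = 0 ∨ degreeOf 1 q < p.natDegree - 1)

/-!
Put `p = Q(0,z)` and `Q₂ = p(z) + x Σᵢ p⁽ⁱ⁾(z) qᵢ(x, p(z))`. If `Q(x, z + x B(x, Q₂)) ≡ Q₂ (mod xⁿ)`
for some `B(x,w)`, the endomorphism `x ↦ x, z ↦ ζ = z + x B(x, Q₂ - xⁿy), y ↦ y + (Q(x,ζ) - Q₂)/xⁿ`
of `ℂ[x,y,z]` maps `xⁿy - Q` to `xⁿy - Q₂`. The congruence can be inverted (with `-B`), and the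
endomorphism built from the inverted congruence is an inverse, because an endomorphism fixing `x`,
`z` and `xⁿy - Q` is the identity.

The congruence is reached `x`-adically. If it holds modulo `x^(k+1)` with error `x^(k+1) E`,
expand `E(0,z) = Σ_{i ≥ 1} p⁽ⁱ⁾(z) aᵢ(p(z))`, which is possible because the polynomials
`p⁽ⁱ⁾ pᵐ` (`1 ≤ i ≤ deg p`) have every degree exactly once. By Taylor's formula the term `i = 1`
is absorbed by `B ↦ B - xᵏ a₁(z)` and the others by `qᵢ ↦ qᵢ + xᵏ aᵢ(z)`.
-/

theorem dvd_aeval_sub_aeval {σ R A : Type*} [CommSemiring R] [CommRing A] [Algebra R A]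
    {d : A} {f g : σ → A} (h : ∀ i, d ∣ f i - g i) (p : MvPolynomial σ R) :
    d ∣ aeval f p - aeval g p := by
  simp only [← Ideal.mem_span_singleton, ← Ideal.Quotient.eq, ← Ideal.Quotient.mkₐ_eq_mk R,
    comp_aeval_apply] at h ⊢
  simp only [h]

section Pair

variable {R A : Type*} [CommSemiring R] [CommRing A] [Algebra R A]

theorem map_aeval_pair {B : Type*} [CommRing B] [Algebra R B] (φ : A →ₐ[R] B) (a b : A)
    (p : MvPolynomial (Fin 2) R) : φ (aeval ![a, b] p) = aeval ![φ a, φ b] p := by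
  rw [comp_aeval_apply]
  congr 2
  funext i
  fin_cases i <;> rfl

theorem aeval_pair_X (p : MvPolynomial (Fin 2) R) : aeval ![X 0, X 1] p = p := by
  convert aeval_X_left_apply p
  funext i
  fin_cases i <;> rfl

theorem sub_dvd_aeval_pair_sub (p : MvPolynomial (Fin 2) R) (a u v : A) :
    u - v ∣ aeval ![a, u] p - aeval ![a, v] p :=
  dvd_aeval_sub_aeval (fun i => by fin_cases i <;> simp) p

theorem exists_aeval_pair_add (p : MvPolynomial (Fin 2) R) (a u v : A) :
    ∃ c : A, aeval ![a, u + v] p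
      = aeval ![a, u] p + v * aeval ![a, u] (pderiv 1 p) + v ^ 2 * c := by
  induction p using MvPolynomial.induction_on with
  | C r => exact ⟨0, by simp⟩
  | add p q hp hq =>
    obtain ⟨c, hc⟩ := hp
    obtain ⟨d, hd⟩ := hq
    exact ⟨c + d, by simp only [map_add, hc, hd]; ring⟩
  | mul_X p j hp =>
    obtain ⟨c, hc⟩ := hp
    fin_cases j
    · refine ⟨c * a, ?_⟩
      simp only [Fin.zero_eta, map_mul, hc, aeval_X, Matrix.cons_val_zero, Derivation.leibniz,
        pderiv_X, ne_eq, zero_ne_one, not_false_eq_true, Pi.single_eq_of_ne, smul_eq_mul, mul_zero,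
        zero_add]
      ring
    · refine ⟨c * (u + v) + aeval ![a, u] (pderiv 1 p), ?_⟩
      simp only [Fin.mk_one, map_mul, hc, aeval_X, Matrix.cons_val_one, Matrix.cons_val_fin_one,
        Derivation.leibniz, pderiv_X, Pi.single_eq_same, smul_eq_mul, mul_one, map_add]
      ring

end Pair

open scoped Polynomial

theorem Polynomial.degree_iterate_derivative {R : Type*} [Semiring R] [IsAddTorsionFree R]
    {s : R[X]} (hs : s ≠ 0) {i : ℕ} (hi : i ≤ s.natDegree) :
    (Polynomial.derivative^[i] s).degree = ↑(s.natDegree - i) := by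
  induction i with
  | zero => simpa using Polynomial.degree_eq_natDegree hs
  | succ i ih =>
    have hdeg : (Polynomial.derivative^[i] s).natDegree = s.natDegree - i :=
      Polynomial.natDegree_eq_of_degree_eq_some (ih (by omega))
    rw [Function.iterate_succ_apply', Polynomial.degree_derivative (by omega), hdeg, Nat.sub_sub]

def Polynomial.derivativePowSequence {K : Type*} [Field K] [CharZero K] (s : K[X])
    (hs : 1 ≤ s.natDegree) : Polynomial.Sequence K where
  elems' M := Polynomial.derivative^[s.natDegree - M % s.natDegree] s * s ^ (M / s.natDegree)
  degree_eq' M := by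
    have hs0 : s ≠ 0 := by rintro rfl; simp at hs
    rw [Polynomial.degree_mul, Polynomial.degree_pow,
      Polynomial.degree_iterate_derivative hs0 (Nat.sub_le _ _), Polynomial.degree_eq_natDegree hs0,
      nsmul_eq_mul]
    norm_cast
    rw [Nat.sub_sub_self (Nat.mod_lt M hs).le, Nat.mod_add_div']

theorem Polynomial.exists_eq_sum_iterate_derivative_mul_aeval {K : Type*} [Field K] [CharZero K]
    (s : K[X]) (hs : 1 ≤ s.natDegree) (u : K[X]) :
    ∃ a : ℕ → K[X], u = ∑ i ∈ Finset.Icc 1 s.natDegree,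
      Polynomial.derivative^[i] s * Polynomial.aeval s (a i) := by
  let L : (ℕ → K[X]) →ₗ[K] K[X] := ∑ i ∈ Finset.Icc 1 s.natDegree,
    LinearMap.mulLeft K (Polynomial.derivative^[i] s) ∘ₗ (Polynomial.aeval s).toLinearMap ∘ₗ
      LinearMap.proj i
  have hL (a : ℕ → K[X]) : L a = ∑ i ∈ Finset.Icc 1 s.natDegree,
      Polynomial.derivative^[i] s * Polynomial.aeval s (a i) := by
    simp [L]
  have hrange : Set.range (Polynomial.derivativePowSequence s hs) ⊆ LinearMap.range L := by
    rintro _ ⟨M, rfl⟩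
    have hmem : s.natDegree - M % s.natDegree ∈ Finset.Icc 1 s.natDegree := by
      have := Nat.mod_lt M hs
      simp only [Finset.mem_Icc]
      omega
    refine ⟨Pi.single (s.natDegree - M % s.natDegree) (Polynomial.X ^ (M / s.natDegree)), ?_⟩
    rw [hL, Finset.sum_eq_single_of_mem _ hmem fun j _ hj => by simp [hj]]
    simp [Polynomial.derivativePowSequence]
  have hspan := (Polynomial.derivativePowSequence s hs).span fun i =>
    (Polynomial.leadingCoeff_ne_zero.mpr (Polynomial.Sequence.ne_zero _ i)).isUnit
  obtain ⟨a, rfl⟩ : u ∈ LinearMap.range L := Submodule.span_le.mpr hrange (hspan ▸ Submodule.mem_top)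
  exact ⟨a, hL a⟩

def evalX0 : R2 →ₐ[ℂ] Polynomial ℂ := aeval ![0, Polynomial.X]

@[simp]
theorem evalX0_X0 : evalX0 (X 0) = 0 := by simp [evalX0]

@[simp]
theorem evalX0_X1 : evalX0 (X 1) = Polynomial.X := by simp [evalX0]

theorem evalX0_aeval_X1 (f : Polynomial ℂ) : evalX0 (Polynomial.aeval (X 1) f) = f := by
  rw [← Polynomial.aeval_algHom_apply, evalX0_X1, Polynomial.aeval_X_left_apply]

theorem evalX0_aeval_pair (w p : R2) :
    evalX0 (aeval ![X 0, w] p) = Polynomial.aeval (evalX0 w) (evalX0 p) := by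
  rw [← AlgHom.comp_apply, ← AlgHom.comp_apply]
  congr 1
  ext i
  fin_cases i <;> simp

theorem evalX0_pderiv (w : R2) : evalX0 (pderiv 1 w) = Polynomial.derivative (evalX0 w) := by
  induction w using MvPolynomial.induction_on with
  | C r => simp [evalX0]
  | add p q hp hq => simp only [map_add, hp, hq]
  | mul_X p j hp =>
    fin_cases j
    · simp [hp, pderiv_X]
    · simp only [Fin.mk_one, Derivation.leibniz, pderiv_X, Pi.single_eq_same, smul_eq_mul, mul_one,
        map_add, map_mul, evalX0_X1, hp, Polynomial.derivative_mul, Polynomial.derivative_X]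
      ring

theorem X0_dvd_sub_aeval_X1_evalX0 (w : R2) :
    (X 0 : R2) ∣ w - Polynomial.aeval (X 1 : R2) (evalX0 w) := by
  have h : Polynomial.aeval (X 1 : R2) (evalX0 w) = aeval ![0, X 1] w := by
    rw [← AlgHom.comp_apply]
    congr 1
    ext i; fin_cases i <;> simp
  have := dvd_aeval_sub_aeval (d := (X 0 : R2)) (f := ![X 0, X 1]) (g := ![0, X 1])
    (fun i => by fin_cases i <;> simp) w
  rwa [aeval_pair_X, ← h] at this

theorem X0_dvd_of_evalX0_eq_zero {w : R2} (hw : evalX0 w = 0) : (X 0 : R2) ∣ w := by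
  simpa [hw] using X0_dvd_sub_aeval_X1_evalX0 w

def normalForm (p : Polynomial ℂ) (q : ℕ → R2) : R2 :=
  Polynomial.aeval (X 1) p +
    X 0 * ∑ i ∈ Finset.Icc 2 p.natDegree,
      Polynomial.aeval (X 1) ((⇑Polynomial.derivative)^[i] p) *
        aeval ![X 0, Polynomial.aeval (X 1) p] (q i)

def zShift (B Q : R2) : R2 := X 1 + X 0 * aeval ![X 0, Q] B

def ShiftCongr (n : ℕ) (B Q₁ Q₂ : R2) : Prop :=
  (X 0 : R2) ^ n ∣ aeval ![X 0, zShift B Q₂] Q₁ - Q₂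

theorem evalX0_normalForm (p : Polynomial ℂ) (q : ℕ → R2) : evalX0 (normalForm p q) = p := by
  simp [normalForm, evalX0_aeval_X1]

theorem evalX0_zShift (B Q : R2) : evalX0 (zShift B Q) = Polynomial.X := by
  simp [zShift]

theorem normalForm_add_X0_pow_mul (p : Polynomial ℂ) (q r : ℕ → R2) (k : ℕ) :
    normalForm p (fun i => q i + X 0 ^ k * r i) = normalForm p q + X 0 ^ (k + 1) *
      ∑ i ∈ Finset.Icc 2 p.natDegree, Polynomial.aeval (X 1) ((⇑Polynomial.derivative)^[i] p) *
        aeval ![X 0, Polynomial.aeval (X 1) p] (r i) := by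
  have hsum : ∑ i ∈ Finset.Icc 2 p.natDegree,
      Polynomial.aeval (X 1 : R2) ((⇑Polynomial.derivative)^[i] p) *
        aeval ![X 0, Polynomial.aeval (X 1) p] (q i + X 0 ^ k * r i)
      = ∑ i ∈ Finset.Icc 2 p.natDegree, Polynomial.aeval (X 1) ((⇑Polynomial.derivative)^[i] p) *
          aeval ![X 0, Polynomial.aeval (X 1) p] (q i)
        + X 0 ^ k * ∑ i ∈ Finset.Icc 2 p.natDegree,
          Polynomial.aeval (X 1) ((⇑Polynomial.derivative)^[i] p) *
            aeval ![X 0, Polynomial.aeval (X 1) p] (r i) := by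
    rw [Finset.mul_sum, ← Finset.sum_add_distrib]
    refine Finset.sum_congr rfl fun i _ => ?_
    simp only [map_add, map_mul, map_pow, aeval_X, Matrix.cons_val_zero]
    ring
  rw [normalForm, normalForm, hsum]
  ring

theorem degreeOf_add_X0_pow_mul_aeval_X1_lt {q : R2} {k : ℕ} (hq : q = 0 ∨ degreeOf 0 q < k)
    (f : Polynomial ℂ) : degreeOf 0 (q + X 0 ^ k * Polynomial.aeval (X 1) f) < k + 1 := by
  have hf : degreeOf 0 (Polynomial.aeval (X 1 : R2) f) = 0 := by
    rw [← Nat.le_zero, Polynomial.aeval_eq_sum_range]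
    refine (degreeOf_sum_le _ _ _).trans (Finset.sup_le fun i _ => ?_)
    rw [Algebra.smul_def, MvPolynomial.algebraMap_eq]
    exact (degreeOf_C_mul_le _ _ _).trans (degreeOf_X_pow_of_ne _ (by decide)).le
  have hmul : degreeOf 0 ((X 0 : R2) ^ k * Polynomial.aeval (X 1) f) ≤ k := by
    simpa [hf] using degreeOf_mul_le 0 ((X 0 : R2) ^ k) (Polynomial.aeval (X 1 : R2) f)
  have hq' : degreeOf 0 q ≤ k := hq.elim (fun h => by simp [h]) le_of_lt
  exact (degreeOf_add_le 0 _ _).trans_lt (max_lt (Nat.lt_succ_of_le hq') (Nat.lt_succ_of_le hmul))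

theorem shiftCongr_succ_of_correction {Q B Q₂ E : R2} {k : ℕ}
    (hE : aeval ![X 0, zShift B Q₂] Q - Q₂ = X 0 ^ (k + 1) * E) (b V : R2)
    (hcorr : X 0 ∣ E - V + aeval ![X 0, Q₂ + X 0 ^ (k + 1) * V] b *
      aeval ![X 0, zShift B Q₂] (pderiv 1 Q)) :
    ShiftCongr (k + 2) (B + X 0 ^ k * b) Q (Q₂ + X 0 ^ (k + 1) * V) := by
  set Q₂' := Q₂ + X 0 ^ (k + 1) * V
  obtain ⟨c₁, hc₁⟩ := sub_dvd_aeval_pair_sub B (X 0 : R2) Q₂' Q₂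
  set W := aeval ![X 0, Q₂'] b + X 0 * V * c₁
  have hshift : zShift (B + X 0 ^ k * b) Q₂' = zShift B Q₂ + X 0 ^ (k + 1) * W := by
    simp only [zShift, W, map_add, map_mul, map_pow, aeval_X, Matrix.cons_val_zero]
    linear_combination (X 0 : R2) * hc₁
  obtain ⟨c₂, hc₂⟩ := exists_aeval_pair_add Q (X 0 : R2) (zShift B Q₂) (X 0 ^ (k + 1) * W)
  obtain ⟨M, hM⟩ := hcorr
  refine ⟨M + V * c₁ * aeval ![X 0, zShift B Q₂] (pderiv 1 Q) + X 0 ^ k * W ^ 2 * c₂, ?_⟩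
  rw [hshift, hc₂]
  linear_combination hE + X 0 ^ (k + 1) * hM

theorem exists_shiftCongr_normalForm (Q : R2) (hQ : 1 ≤ (evalX0 Q).natDegree) (k : ℕ) :
    ∃ (B : R2) (q : ℕ → R2), (∀ i, q i = 0 ∨ degreeOf 0 (q i) < k) ∧
      ShiftCongr (k + 1) B Q (normalForm (evalX0 Q) q) := by
  set s := evalX0 Q
  induction k with
  | zero =>
    refine ⟨0, 0, fun i => Or.inl rfl, ?_⟩
    have h0 : normalForm s 0 = Polynomial.aeval (X 1) s := by simp [normalForm]
    have h1 : zShift 0 (normalForm s 0) = X 1 := by simp [zShift]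
    rw [ShiftCongr, h1, aeval_pair_X, h0, zero_add, pow_one]
    exact X0_dvd_sub_aeval_X1_evalX0 Q
  | succ k ih =>
    obtain ⟨B, q, hq, E, hE⟩ := ih
    obtain ⟨a, ha⟩ := Polynomial.exists_eq_sum_iterate_derivative_mul_aeval s hQ (evalX0 E)
    set r : ℕ → R2 := fun i => Polynomial.aeval (X 1) (a i)
    refine ⟨B + X 0 ^ k * -r 1, fun i => q i + X 0 ^ k * r i,
      fun i => Or.inr (degreeOf_add_X0_pow_mul_aeval_X1_lt (hq i) (a i)), ?_⟩
    rw [normalForm_add_X0_pow_mul]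
    refine shiftCongr_succ_of_correction hE (-r 1) _ ?_
    set V : R2 := ∑ i ∈ Finset.Icc 2 s.natDegree,
      Polynomial.aeval (X 1) ((⇑Polynomial.derivative)^[i] s) *
        aeval ![X 0, Polynomial.aeval (X 1) s] (r i)
    have hV : evalX0 V = ∑ i ∈ Finset.Icc 2 s.natDegree,
        Polynomial.derivative^[i] s * Polynomial.aeval s (a i) := by
      simp only [V, r, map_sum, map_mul, evalX0_aeval_pair, evalX0_aeval_X1]
    have hb : evalX0 (aeval ![X 0, normalForm s q + X 0 ^ (k + 1) * V] (-r 1))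
        = -Polynomial.aeval s (a 1) := by
      simp only [r, evalX0_aeval_pair, map_neg, map_add, map_mul, map_pow, evalX0_normalForm,
        evalX0_X0, evalX0_aeval_X1, zero_pow (Nat.succ_ne_zero k), zero_mul, add_zero]
    have hD : evalX0 (aeval ![X 0, zShift B (normalForm s q)] (pderiv 1 Q))
        = Polynomial.derivative s := by
      rw [evalX0_aeval_pair, evalX0_zShift, evalX0_pderiv, Polynomial.aeval_X_left_apply]
    refine X0_dvd_of_evalX0_eq_zero ?_
    rw [map_add, map_sub, map_mul, ha, hV, hb, hD, ← Finset.insert_Icc_add_one_left_eq_Icc hQ,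
      one_add_one_eq_two, Finset.sum_insert (by simp), Function.iterate_one]
    ring

theorem ShiftCongr.symm {n : ℕ} {B Q₁ Q₂ : R2} (h : ShiftCongr n B Q₁ Q₂) :
    ShiftCongr n (-B) Q₂ Q₁ := by
  set A : R2 →ₐ[ℂ] R2 := aeval ![X 0, zShift (-B) Q₁]
  have hA0 : A (X 0) = X 0 := by simp [A]
  have hA1 : A (X 1) = zShift (-B) Q₁ := by simp [A]
  suffices H : ∀ k ≤ n, (X 0 : R2) ^ k ∣ A Q₂ - Q₁ from H n le_rfl
  intro k hk
  induction k with
  | zero => simp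
  | succ k ih =>
    have hψ : A (zShift B Q₂) - X 1 = X 0 * (aeval ![X 0, A Q₂] B - aeval ![X 0, Q₁] B) := by
      simp only [zShift, map_add, map_mul, hA0, hA1, map_aeval_pair, map_neg]
      ring
    have h1 : X 0 ^ (k + 1) ∣ A (zShift B Q₂) - X 1 := by
      rw [hψ, pow_succ']
      exact mul_dvd_mul_left _ ((ih (by omega)).trans (sub_dvd_aeval_pair_sub B _ _ _))
    have h2 : X 0 ^ (k + 1) ∣ aeval ![X 0, A (zShift B Q₂)] Q₁ - Q₁ := by
      have := h1.trans (sub_dvd_aeval_pair_sub Q₁ (X 0) (A (zShift B Q₂)) (X 1))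
      rwa [aeval_pair_X] at this
    have h3 : X 0 ^ (k + 1) ∣ aeval ![X 0, A (zShift B Q₂)] Q₁ - A Q₂ := by
      have hA : (X 0 : R2) ^ n ∣ aeval ![X 0, A (zShift B Q₂)] Q₁ - A Q₂ := by
        simpa only [map_pow, hA0, map_sub, map_aeval_pair] using map_dvd A h
      exact (pow_dvd_pow (X 0) hk).trans hA
    simpa using dvd_sub h2 h3

theorem toXYZ_apply (p : R2) : toXYZ p = aeval ![X 0, X 2] p := rfl

@[simp]
theorem toXYZ_X0 : toXYZ (X 0) = X 0 := by simp [toXYZ]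

@[simp]
theorem toXYZ_X1 : toXYZ (X 1) = X 2 := by simp [toXYZ]

theorem ShiftCongr.exists_algHom {n : ℕ} {B Q₁ Q₂ : R2} (h : ShiftCongr n B Q₁ Q₂) :
    ∃ Θ : R3 →ₐ[ℂ] R3, Θ (X 0) = X 0 ∧ Θ (X 2) = X 2 + X 0 * aeval ![X 0, -danPoly Q₂ n] B ∧
      Θ (danPoly Q₁ n) = danPoly Q₂ n := by
  set ζ : R3 := X 2 + X 0 * aeval ![X 0, -danPoly Q₂ n] B
  have hζ : X 0 ^ n ∣ ζ - toXYZ (zShift B Q₂) := by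
    have hsub : ζ - toXYZ (zShift B Q₂)
        = X 0 * (aeval ![X 0, -danPoly Q₂ n] B - aeval ![X 0, toXYZ Q₂] B) := by
      simp only [ζ, zShift, map_add, map_mul, toXYZ_X0, toXYZ_X1, map_aeval_pair]
      ring
    have hd : X 0 ^ n ∣ -danPoly Q₂ n - toXYZ Q₂ := ⟨-X 1, by rw [danPoly]; ring⟩
    rw [hsub]
    exact dvd_mul_of_dvd_right (hd.trans (sub_dvd_aeval_pair_sub B _ _ _)) _
  obtain ⟨C, hC⟩ : X 0 ^ n ∣ aeval ![X 0, ζ] Q₁ - toXYZ Q₂ := by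
    have h1 := map_dvd toXYZ h
    rw [map_pow, toXYZ_X0, map_sub, map_aeval_pair, toXYZ_X0] at h1
    simpa using dvd_add (hζ.trans (sub_dvd_aeval_pair_sub Q₁ (X 0) ζ _)) h1
  refine ⟨aeval ![X 0, X 1 + C, ζ], by simp, by simp, ?_⟩
  simp only [danPoly, map_sub, map_mul, map_pow, toXYZ_apply, map_aeval_pair, aeval_X,
    Matrix.cons_val_zero, Matrix.cons_val_one, Matrix.cons_val_two, Matrix.tail_cons, Matrix.head_cons]
  rw [← toXYZ_apply]
  linear_combination -hC

theorem algHom_eq_id_of_map_danPoly {Φ : R3 →ₐ[ℂ] R3} {Q : R2} {n : ℕ} (h0 : Φ (X 0) = X 0)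
    (h2 : Φ (X 2) = X 2) (hQ : Φ (danPoly Q n) = danPoly Q n) : Φ = AlgHom.id ℂ R3 := by
  have hQ' : Φ (toXYZ Q) = toXYZ Q := by rw [toXYZ_apply, map_aeval_pair, h0, h2]
  have h1 : Φ (X 1) = X 1 := by
    apply mul_left_cancel₀ (pow_ne_zero n (X_ne_zero 0 : (X 0 : R3) ≠ 0))
    simpa [danPoly, hQ', h0] using hQ
  ext i
  fin_cases i <;> simp [h0, h1, h2]

theorem ShiftCongr.danEquiv {n : ℕ} {B Q₁ Q₂ : R2} (h : ShiftCongr n B Q₁ Q₂) :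
    DanEquiv Q₁ n Q₂ n := by
  obtain ⟨Θ, hΘ0, hΘ2, hΘ⟩ := h.exists_algHom
  obtain ⟨Θ', hΘ'0, hΘ'2, hΘ'⟩ := h.symm.exists_algHom
  have hΘΘ' : Θ.comp Θ' = AlgHom.id ℂ R3 := by
    refine algHom_eq_id_of_map_danPoly (Q := Q₂) (n := n) ?_ ?_ ?_
    · rw [AlgHom.comp_apply, hΘ'0, hΘ0]
    · rw [AlgHom.comp_apply, hΘ'2, map_add, map_mul, hΘ2, hΘ0, map_aeval_pair, hΘ0, map_neg, map_neg,
        hΘ]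
      ring
    · rw [AlgHom.comp_apply, hΘ', hΘ]
  have hΘ'Θ : Θ'.comp Θ = AlgHom.id ℂ R3 := by
    refine algHom_eq_id_of_map_danPoly (Q := Q₁) (n := n) ?_ ?_ ?_
    · rw [AlgHom.comp_apply, hΘ0, hΘ'0]
    · rw [AlgHom.comp_apply, hΘ2, map_add, map_mul, hΘ'2, hΘ'0, map_aeval_pair, hΘ'0, map_neg, map_neg,
        hΘ']
      ring
    · rw [AlgHom.comp_apply, hΘ, hΘ']
  refine ⟨AlgEquiv.ofAlgHom Θ Θ' hΘΘ' hΘ'Θ, ?_⟩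
  rw [Ideal.map_span, Set.image_singleton]
  exact congrArg (fun x => Ideal.span {x}) hΘ

/-- every Danielewski hypersurface is equivalent to one of the form
`x^n y = p(z) + x Σ_{i=2}^{deg p} p^{(i)}(z) q_i(x, p(z))` with `deg_x q_i < n - 1`. -/
theorem stmt_8 (n : ℕ) (hn : 1 ≤ n) (Q : R2) (hQ : 2 ≤ (Q0 Q).natDegree) :
    ∃ (p : Polynomial ℂ) (q : ℕ → R2), 2 ≤ p.natDegree ∧
      (∀ i, 2 ≤ i → i ≤ p.natDegree → (q i = 0 ∨ (q i).degreeOf 0 < n - 1)) ∧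
      DanEquiv Q n
        (Polynomial.aeval (X 1) p +
          X 0 * ∑ i ∈ Finset.Icc 2 p.natDegree,
            Polynomial.aeval (X 1) ((⇑Polynomial.derivative)^[i] p) *
              aeval ![X 0, Polynomial.aeval (X 1) p] (q i)) n := by
  obtain ⟨B, q, hq, hcongr⟩ := exists_shiftCongr_normalForm Q (le_trans one_le_two hQ) (n - 1)
  rw [Nat.sub_add_cancel hn] at hcongr
  exact ⟨Q0 Q, q, hQ, fun i _ _ => hq i, hcongr.danEquiv⟩
end
end

section
/- Let n ≥ 1 be an integer and Q ∈ ℂ[x,z] with deg_z Q(0,z) ≥ 2. Then there exists a polynomial Q'(x,z) ∈ ℂ[x,z] with deg_z Q'(0,z) ≥ 2 such that X_{Q',n} is in reduced standard form and the coordinate rings S_{Q,n} and S_{Q',n} are isomorphic as ℂ-algebras. -/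
open MvPolynomial

noncomputable section

/-!
Write `Q ∈ ℂ[x][z]` with `Q(0,z) = p`, `deg p = d ≥ 2`. Three kinds of moves do not change
`S_{Q,n}` up to isomorphism: adding a multiple of `x^n` to `Q` (via `y ↦ y + h`), multiplying `Q`
by `1 - x v`, which is a unit modulo `x^n` (via `y ↦ (1 - x v) y`, inverted by
`y ↦ s y + v^n Q` with `s = ∑_{i<n} (x v)^i`), and the shift `z ↦ z + e(x)`. Dividing by `p`
one power of `x` at a time (a Weierstrass-type preparation modulo `x^n`) brings `Q` to
`p(z) + x r(x,z)` with `deg_z r < d`. Since the coefficient of `z^d` is then the nonzero constant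
`lc p`, a Tschirnhaus shift `z ↦ z + e(x)` with `e(0) = 0` removes the `x`-part of the coefficient
of `z^{d-1}`. Finally reducing every `z`-coefficient modulo `x^n` gives `deg_x Q < n`.
-/

namespace Polynomial

theorem exists_coeff_eq_apply_coeff {R : Type*} [Semiring R] (φ : R → R) (hφ : φ 0 = 0)
    (f : R[X]) : ∃ g : R[X], ∀ i, g.coeff i = φ (f.coeff i) := by
  refine ⟨∑ i ∈ f.support, monomial i (φ (f.coeff i)), fun i => ?_⟩
  simp only [finsetSum_coeff, coeff_monomial, Finset.sum_ite_eq']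
  split_ifs with h
  · rfl
  · rw [notMem_support_iff.mp h, hφ]

theorem coeff_taylor_of_natDegree_le {R : Type*} [Semiring R] {f : R[X]} {m : ℕ}
    (hf : f.natDegree ≤ m) (r : R) : (taylor r f).coeff m = f.coeff m := by
  have hD : (hasseDeriv m f).natDegree ≤ 0 := (natDegree_hasseDeriv_le f m).trans (by omega)
  rw [taylor_coeff, eq_C_of_natDegree_le_zero hD]
  simp [hasseDeriv_coeff]

theorem coeff_taylor_of_natDegree_le_succ {R : Type*} [CommSemiring R] {f : R[X]} {k : ℕ}
    (hf : f.natDegree ≤ k + 1) (r : R) :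
    (taylor r f).coeff k = f.coeff k + (k + 1) * f.coeff (k + 1) * r := by
  have hD : (hasseDeriv k f).natDegree ≤ 1 := (natDegree_hasseDeriv_le f k).trans (by omega)
  rw [taylor_coeff, eq_X_add_C_of_natDegree_le_one hD]
  simp [hasseDeriv_coeff, add_comm 1 k, Nat.choose_succ_self_right]
  ring

variable {A : Type*} [CommRing A]

theorem exists_eq_map_C_add_C_X_mul (f : A[X][X]) :
    ∃ q : A[X][X], f = (f.map (evalRingHom 0)).map C + C X * q := by
  have : C X ∣ f - (f.map (evalRingHom 0)).map C := by
    rw [C_dvd_iff_dvd_coeff]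
    intro i
    simp [X_dvd_iff, coeff_zero_eq_eval_zero]
  obtain ⟨q, hq⟩ := this
  exact ⟨q, by linear_combination hq⟩

theorem exists_eq_add_C_mul_of_coeff_modByMonic (m : A[X]) (f : A[X][X]) :
    ∃ t h : A[X][X], f = t + C m * h ∧ ∀ i, t.coeff i = f.coeff i %ₘ m := by
  obtain ⟨t, ht⟩ := exists_coeff_eq_apply_coeff (· %ₘ m) (zero_modByMonic m) f
  obtain ⟨h, hh⟩ := exists_coeff_eq_apply_coeff (· /ₘ m) (zero_divByMonic m) f
  refine ⟨t, h, ext fun i => ?_, ht⟩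
  rw [coeff_add, coeff_C_mul, ht, hh]
  exact (modByMonic_add_div (f.coeff i) m).symm

section Nontrivial

variable [Nontrivial A]

theorem exists_eq_mul_add_degree_lt {P : A[X]} (hP : IsUnit P.leadingCoeff) (s : A[X]) :
    ∃ g u : A[X], s = P * g + u ∧ u.degree < P.degree := by
  obtain ⟨b, hb⟩ := hP.exists_right_inv
  have hM : (P * C b).Monic := monic_mul_C_of_leadingCoeff_mul_eq_one hb
  refine ⟨C b * (s /ₘ (P * C b)), s %ₘ (P * C b), ?_, ?_⟩
  · linear_combination -(modByMonic_add_div s (P * C b))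
  · rw [← degree_mul_C_of_isUnit (IsUnit.of_mul_eq_one_right _ hb) P]
    exact degree_modByMonic_lt s hM

-- Each step divides the error term by `P` and absorbs the quotient into the factor `1 - C x * v`,
-- gaining one power of `x`.
theorem exists_one_sub_mul_eq (x : A) {P : A[X]} (hP : IsUnit P.leadingCoeff) (q : A[X])
    (k : ℕ) :
    ∃ v r s : A[X], (1 - C x * v) * (P + C x * q) = P + C x * r + C x ^ (k + 1) * s ∧
      r.degree < P.degree := by
  induction k with
  | zero =>
    refine ⟨0, 0, q, by ring, ?_⟩
    rw [degree_zero, bot_lt_iff_ne_bot, Ne, degree_eq_bot]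
    rintro rfl
    simp at hP
  | succ k ih =>
    obtain ⟨v, r, s, h, hr⟩ := ih
    obtain ⟨g, u, rfl, hu⟩ := exists_eq_mul_add_degree_lt hP s
    refine ⟨v + C x ^ k * g - C x ^ (k + 1) * g * v, r + C x ^ k * u,
      -(g * r) - C x ^ k * g * (P * g + u), ?_, ?_⟩
    · linear_combination (1 - C x ^ (k + 1) * g) * h
    · refine (degree_add_le _ _).trans_lt (max_lt hr ?_)
      rw [← C_pow, ← smul_eq_C_mul]
      exact (degree_smul_le _ _).trans_lt hu

theorem exists_eq_add_C_X_pow_mul {n : ℕ} (hn : n ≠ 0) (g : A[X][X]) :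
    ∃ t h : A[X][X], g = t + C X ^ n * h ∧
      (∀ i, (t.coeff i).natDegree < n ∧ (t.coeff i).eval 0 = (g.coeff i).eval 0) ∧
      ∀ i, (g.coeff i).natDegree < n → t.coeff i = g.coeff i := by
  obtain ⟨t, h, hg, ht⟩ := exists_eq_add_C_mul_of_coeff_modByMonic (X ^ n) g
  have hXn : (X ^ n : A[X]).Monic := monic_X_pow n
  have hXn_ne : (X ^ n : A[X]) ≠ 1 := fun h => hn (by simpa using congr_arg natDegree h)
  refine ⟨t, h, by rw [hg, C_pow], fun i => ⟨?_, ?_⟩, fun i hi => ?_⟩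
  · rw [ht]
    exact (natDegree_modByMonic_lt _ hXn hXn_ne).trans_eq (natDegree_X_pow n)
  · conv_rhs => rw [← modByMonic_add_div (g.coeff i) (X ^ n)]
    simp [ht, hn]
  · rw [ht, modByMonic_eq_self_iff hXn, degree_X_pow]
    exact degree_le_natDegree.trans_lt (by exact_mod_cast hi)

end Nontrivial

-- Shifting by `e` adds `(k + 1) * lc p * e` to the coefficient of `X ^ k`; `e` is chosen to cancel
-- the part `X * r.coeff k` of that coefficient.
theorem exists_coeff_taylor_eq_C {K : Type*} [Field K] [CharZero K] (p : K[X]) {k : ℕ}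
    (hp : p.natDegree = k + 1) {r : K[X][X]} (hr : r.degree < p.degree) :
    ∃ e : K[X], e.eval 0 = 0 ∧
      ∀ i, k ≤ i → (taylor e (p.map C + C X * r)).coeff i = C (p.coeff i) := by
  have hcoeff : ∀ i, (p.map C + C X * r).coeff i = C (p.coeff i) + X * r.coeff i := fun i => by
    simp [coeff_C_mul]
  have hr_top : ∀ i, k + 1 ≤ i → r.coeff i = 0 := fun i hi =>
    coeff_eq_zero_of_degree_lt (hr.trans_le (degree_le_natDegree.trans (by exact_mod_cast hp ▸ hi)))
  have hdeg : (p.map C + C X * r).natDegree ≤ k + 1 := by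
    refine natDegree_le_iff_coeff_eq_zero.mpr fun i hi => ?_
    rw [hcoeff, hr_top i hi.le, coeff_eq_zero_of_natDegree_lt (hp ▸ hi)]
    simp
  set c := (k + 1 : K) * p.coeff (k + 1)
  have hc : c ≠ 0 := by
    refine mul_ne_zero (Nat.cast_add_one_ne_zero k) ?_
    rw [← hp]
    exact leadingCoeff_ne_zero.mpr (by rintro rfl; simp at hp)
  have hkc : ((k : K[X]) + 1) * C (p.coeff (k + 1)) * C c⁻¹ = 1 := by
    rw [← C_eq_natCast, ← C_1, ← C_add, ← C_mul, ← C_mul, mul_inv_cancel₀ hc, C_1]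
  refine ⟨-C c⁻¹ * (X * r.coeff k), by simp, fun i hi => ?_⟩
  rcases hi.eq_or_lt with rfl | hi
  · rw [coeff_taylor_of_natDegree_le_succ hdeg, hcoeff, hcoeff, hr_top _ le_rfl]
    linear_combination (-(X * r.coeff k)) * hkc
  rcases (Nat.succ_le_of_lt hi).eq_or_lt with rfl | hi
  · rw [coeff_taylor_of_natDegree_le hdeg, hcoeff, hr_top _ le_rfl, mul_zero, add_zero]
  · rw [coeff_eq_zero_of_natDegree_lt ((natDegree_taylor _ _).trans_lt (hdeg.trans_lt hi)),
      coeff_eq_zero_of_natDegree_lt (hp ▸ hi), C_0]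

end Polynomial

namespace MvPolynomial

variable {σ R : Type*} [CommSemiring R]

theorem degreeOf_aeval_X_self_le (i : σ) (c : Polynomial R) :
    degreeOf i (Polynomial.aeval (X i : MvPolynomial σ R) c) ≤ c.natDegree := by
  rcases subsingleton_or_nontrivial R with hR | hR
  · simp [Subsingleton.elim (Polynomial.aeval (X i : MvPolynomial σ R) c) 0]
  rw [Polynomial.aeval_eq_sum_range]
  refine (degreeOf_sum_le _ _ _).trans (Finset.sup_le fun k hk => ?_)
  rw [smul_eq_C_mul]
  refine (degreeOf_C_mul_le _ _ _).trans ?_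
  simpa [Nat.lt_succ_iff] using hk

theorem degreeOf_aeval_X_of_ne {i j : σ} (h : i ≠ j) (c : Polynomial R) :
    degreeOf i (Polynomial.aeval (X j : MvPolynomial σ R) c) = 0 := by
  rw [Polynomial.aeval_eq_sum_range, ← Nat.le_zero]
  refine (degreeOf_sum_le _ _ _).trans (Finset.sup_le fun k _ => ?_)
  rw [smul_eq_C_mul]
  exact (degreeOf_C_mul_le _ _ _).trans (degreeOf_X_pow_of_ne _ h).le

end MvPolynomial

namespace Danielewski

open Polynomial

local notation "𝔵" => (Polynomial.C Polynomial.X : ℂ[X][X])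

-- `ℂ[X][X]` is read as `ℂ[x][z]`: the outer variable is `z`, the coefficients are polynomials
-- in `x`.
def toR2 : ℂ[X][X] →ₐ[ℂ] R2 := aevalTower (aeval (X 0)) (X 1)

@[simp] theorem toR2_C (a : ℂ[X]) : toR2 (C a) = aeval (X 0 : R2) a := aevalTower_C _ _ _

@[simp] theorem toR2_X : toR2 X = X 1 := aevalTower_X _ _

theorem toR2_surjective : Function.Surjective toR2 := by
  intro Q
  refine ⟨MvPolynomial.aeval ![𝔵, Polynomial.X] Q, ?_⟩
  have : toR2.comp (MvPolynomial.aeval ![𝔵, Polynomial.X]) = AlgHom.id ℂ R2 := by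
    ext i
    fin_cases i <;> simp
  exact congr($this Q)

theorem Q0_toR2 (f : ℂ[X][X]) : Q0 (toR2 f) = f.map (evalRingHom 0) := by
  have : ((MvPolynomial.aeval ![0, Polynomial.X]).comp toR2).toRingHom =
      mapRingHom (evalRingHom (0 : ℂ)) := by
    ext <;> simp
  exact congr($this f)

theorem toR2_eq_sum (f : ℂ[X][X]) :
    toR2 f = ∑ i ∈ Finset.range (f.natDegree + 1), aeval (X 0 : R2) (f.coeff i) * X 1 ^ i := by
  conv_lhs => rw [f.as_sum_range_C_mul_X_pow]
  simp

theorem toR2_map_C (p : ℂ[X]) : toR2 (p.map Polynomial.C) = aeval (X 1 : R2) p := by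
  rw [toR2_eq_sum, natDegree_map_eq_of_injective C_injective, aeval_eq_sum_range]
  simp [MvPolynomial.smul_eq_C_mul]

theorem degreeOf_one_toR2_le (f : ℂ[X][X]) : degreeOf 1 (toR2 f) ≤ f.natDegree := by
  rw [toR2_eq_sum]
  refine (degreeOf_sum_le _ _ _).trans (Finset.sup_le fun i hi => ?_)
  refine (degreeOf_mul_le _ _ _).trans ?_
  rw [degreeOf_aeval_X_of_ne (by decide), zero_add, degreeOf_X_self_pow]
  exact Nat.lt_succ_iff.mp (Finset.mem_range.mp hi)

theorem degreeOf_zero_toR2_le {f : ℂ[X][X]} {m : ℕ} (h : ∀ i, (f.coeff i).natDegree ≤ m) :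
    degreeOf 0 (toR2 f) ≤ m := by
  rw [toR2_eq_sum]
  refine (degreeOf_sum_le _ _ _).trans (Finset.sup_le fun i _ => ?_)
  refine (degreeOf_mul_le _ _ _).trans ?_
  rw [degreeOf_X_pow_of_ne _ (by decide), add_zero]
  exact (degreeOf_aeval_X_self_le _ _).trans (h i)

section Substitution

variable {Q Q' : R2} {n : ℕ}

def danRingHomOfSubst (φ : Fin 3 → R3) (h : danPoly Q n ∣ bind₁ φ (danPoly Q' n)) :
    danRing Q' n →ₐ[ℂ] danRing Q n :=
  Ideal.quotientMapₐ _ (bind₁ φ) <| by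
    rwa [Ideal.span_singleton_le_iff_mem, Ideal.mem_comap, Ideal.mem_span_singleton]

theorem danRingHomOfSubst_comp {φ ψ : Fin 3 → R3}
    (hφ : danPoly Q n ∣ bind₁ φ (danPoly Q' n)) (hψ : danPoly Q' n ∣ bind₁ ψ (danPoly Q n))
    (hφψ : ∀ i, danPoly Q n ∣ bind₁ φ (ψ i) - X i) :
    (danRingHomOfSubst φ hφ).comp (danRingHomOfSubst ψ hψ) = AlgHom.id ℂ (danRing Q n) := by
  refine Ideal.Quotient.algHom_ext _ (MvPolynomial.algHom_ext fun i => ?_)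
  simp only [danRingHomOfSubst, AlgHom.comp_apply, Ideal.Quotient.mkₐ_eq_mk,
    Ideal.quotient_map_mkₐ, bind₁_X_right, AlgHom.id_apply]
  exact Ideal.Quotient.eq.mpr (Ideal.mem_span_singleton.mpr (hφψ i))

def danRingEquivOfSubst (φ ψ : Fin 3 → R3)
    (hφ : danPoly Q n ∣ bind₁ φ (danPoly Q' n)) (hψ : danPoly Q' n ∣ bind₁ ψ (danPoly Q n))
    (hφψ : ∀ i, danPoly Q n ∣ bind₁ φ (ψ i) - X i)
    (hψφ : ∀ i, danPoly Q' n ∣ bind₁ ψ (φ i) - X i) : danRing Q' n ≃ₐ[ℂ] danRing Q n :=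
  AlgEquiv.ofAlgHom _ _ (danRingHomOfSubst_comp hφ hψ hφψ) (danRingHomOfSubst_comp hψ hφ hψφ)

end Substitution

theorem bind₁_toXYZ (φ : Fin 3 → R3) (q : R2) : bind₁ φ (toXYZ q) = aeval ![φ 0, φ 2] q := by
  rw [toXYZ, ← aeval_eq_bind₁, comp_aeval_apply]
  congr 2
  funext i
  fin_cases i <;> simp

@[simp] theorem bind₁_substY_toXYZ (w : R3) (q : R2) :
    bind₁ ![X 0, w, X 2] (toXYZ q) = toXYZ q := by
  rw [bind₁_toXYZ]
  rfl

@[simp] theorem toXYZ_X_zero : toXYZ (X 0) = X 0 := by simp [toXYZ]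

def danRingEquivAddXPowMul (Q h : R2) (n : ℕ) :
    danRing (Q + X 0 ^ n * h) n ≃ₐ[ℂ] danRing Q n :=
  danRingEquivOfSubst ![X 0, X 1 + toXYZ h, X 2] ![X 0, X 1 - toXYZ h, X 2]
    (dvd_of_eq (by simp [danPoly]; ring)) (dvd_of_eq (by simp [danPoly]; ring))
    (fun i => by fin_cases i <;> simp) (fun i => by fin_cases i <;> simp)

def danRingEquivMulOfMulEq {u s t : R2} {n : ℕ} (Q : R2) (h : s * u = 1 - X 0 ^ n * t) :
    danRing Q n ≃ₐ[ℂ] danRing (u * Q) n :=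
  have h' : toXYZ s * toXYZ u = 1 - X 0 ^ n * toXYZ t := by
    simpa only [map_mul, map_sub, map_one, map_pow, toXYZ_X_zero] using congr(toXYZ $h)
  danRingEquivOfSubst ![X 0, toXYZ s * X 1 + toXYZ t * toXYZ Q, X 2] ![X 0, toXYZ u * X 1, X 2]
    ⟨toXYZ s, by simp [danPoly]; linear_combination (toXYZ Q) * h'⟩
    ⟨toXYZ u, by simp [danPoly]; ring⟩
    (fun i => by
      fin_cases i <;> simp
      exact ⟨-toXYZ t, by simp [danPoly]; linear_combination X 1 * h'⟩)
    (fun i => by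
      fin_cases i <;> simp
      exact ⟨-toXYZ t, by simp [danPoly]; linear_combination X 1 * h'⟩)

def substZ (e : ℂ[X]) : Fin 3 → R3 := ![X 0, X 1, X 2 + Polynomial.aeval (X 0) e]

@[simp] theorem substZ_zero (e : ℂ[X]) : substZ e 0 = X 0 := rfl

@[simp] theorem substZ_one (e : ℂ[X]) : substZ e 1 = X 1 := rfl

@[simp] theorem substZ_two (e : ℂ[X]) : substZ e 2 = X 2 + Polynomial.aeval (X 0) e := rfl

theorem bind₁_substZ_aeval_X_zero (e c : ℂ[X]) :
    bind₁ (substZ e) (Polynomial.aeval (X 0 : R3) c) = Polynomial.aeval (X 0) c := by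
  rw [← Polynomial.aeval_algHom_apply, bind₁_X_right, substZ_zero]

theorem bind₁_substZ_toXYZ_toR2 (e : ℂ[X]) (f : ℂ[X][X]) :
    bind₁ (substZ e) (toXYZ (toR2 f)) = toXYZ (toR2 (taylor e f)) := by
  have : ((bind₁ (substZ e)).comp (toXYZ.comp toR2)).toRingHom =
      ((toXYZ.comp toR2).comp ((taylorAlgHom e).restrictScalars ℂ)).toRingHom := by
    refine Polynomial.ringHom_ext (fun a => ?_) ?_
    · simp [← Polynomial.aeval_algHom_apply]
    · simp [toXYZ, ← Polynomial.aeval_algHom_apply]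
  exact congr($this f)

def danRingEquivTaylor (f : ℂ[X][X]) (e : ℂ[X]) (n : ℕ) :
    danRing (toR2 f) n ≃ₐ[ℂ] danRing (toR2 (taylor e f)) n :=
  danRingEquivOfSubst (substZ e) (substZ (-e))
    (dvd_of_eq (by simp [danPoly, bind₁_substZ_toXYZ_toR2]))
    (dvd_of_eq (by simp [danPoly, bind₁_substZ_toXYZ_toR2, taylor_taylor]))
    (fun i => by fin_cases i <;> simp [bind₁_substZ_aeval_X_zero])
    (fun i => by fin_cases i <;> simp [bind₁_substZ_aeval_X_zero])

theorem nonempty_danRingEquiv_of_one_sub_mul_eq {f g v s : ℂ[X][X]} {n : ℕ}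
    (h : (1 - 𝔵 * v) * f = g + 𝔵 ^ n * s) :
    Nonempty (danRing (toR2 f) n ≃ₐ[ℂ] danRing (toR2 g) n) := by
  have hu : (1 - X 0 * toR2 v) * toR2 f = toR2 g + X 0 ^ n * toR2 s := by
    simpa using congr(toR2 $h)
  have hgeom : (∑ i ∈ Finset.range n, (X 0 * toR2 v) ^ i) * (1 - X 0 * toR2 v) =
      1 - X 0 ^ n * toR2 v ^ n := by
    rw [geom_sum_mul_neg, mul_pow]
  have e := danRingEquivMulOfMulEq (toR2 f) hgeom
  rw [hu] at e
  exact ⟨e.trans (danRingEquivAddXPowMul _ _ n)⟩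

theorem exists_danRingEquiv_map_C_add_C_X_mul {n : ℕ} (hn : n ≠ 0) (f : ℂ[X][X])
    (hf : f.map (evalRingHom 0) ≠ 0) :
    ∃ r : ℂ[X][X], r.degree < (f.map (evalRingHom 0)).degree ∧
      Nonempty (danRing (toR2 f) n ≃ₐ[ℂ]
        danRing (toR2 ((f.map (evalRingHom 0)).map Polynomial.C + 𝔵 * r)) n) := by
  have hP : IsUnit ((f.map (evalRingHom 0)).map Polynomial.C).leadingCoeff := by
    rw [leadingCoeff_map_of_injective C_injective, isUnit_C]
    exact isUnit_iff_ne_zero.mpr (leadingCoeff_ne_zero.mpr hf)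
  obtain ⟨q, hq⟩ := exists_eq_map_C_add_C_X_mul f
  obtain ⟨v, r, s, h, hr⟩ := exists_one_sub_mul_eq Polynomial.X hP q (n - 1)
  rw [← hq, Nat.sub_add_cancel (Nat.one_le_iff_ne_zero.mpr hn)] at h
  rw [degree_map_eq_of_injective C_injective] at hr
  exact ⟨r, hr, nonempty_danRingEquiv_of_one_sub_mul_eq h⟩

theorem exists_danRingEquiv_reduced {n : ℕ} (hn : n ≠ 0) (p : ℂ[X]) {k : ℕ}
    (hp : p.natDegree = k + 1) {r : ℂ[X][X]} (hr : r.degree < p.degree) :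
    ∃ t : ℂ[X][X], t.map (evalRingHom 0) = p ∧ (∀ i, (t.coeff i).natDegree < n) ∧
      (∀ i, k ≤ i → t.coeff i = Polynomial.C (p.coeff i)) ∧
      Nonempty (danRing (toR2 (p.map Polynomial.C + 𝔵 * r)) n ≃ₐ[ℂ] danRing (toR2 t) n) := by
  obtain ⟨e, he, hcoeff⟩ := exists_coeff_taylor_eq_C p hp hr
  set g := taylor e (p.map Polynomial.C + 𝔵 * r)
  have hg : g.map (evalRingHom 0) = p := by
    ext1 i
    simp [g, map_taylor, he]
  obtain ⟨t, h, hgt, hlow, hkeep⟩ := exists_eq_add_C_X_pow_mul hn g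
  have eTrunc := danRingEquivAddXPowMul (toR2 t) (toR2 h) n
  rw [show toR2 t + X 0 ^ n * toR2 h = toR2 g by simp [hgt]] at eTrunc
  refine ⟨t, ?_, fun i => (hlow i).1, fun i hi => ?_, ⟨(danRingEquivTaylor _ e n).trans eTrunc⟩⟩
  · ext1 i
    rw [← hg, Polynomial.coeff_map, Polynomial.coeff_map]
    exact (hlow i).2
  · rw [hkeep i (by rw [hcoeff i hi, natDegree_C]; omega), hcoeff i hi]

theorem isReducedStandardForm_toR2 {t : ℂ[X][X]} {p : ℂ[X]} {k n : ℕ} (hk : k ≠ 0)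
    (hp : p.natDegree = k + 1) (ht : t.map (evalRingHom 0) = p)
    (hlow : ∀ i, (t.coeff i).natDegree < n)
    (htop : ∀ i, k ≤ i → t.coeff i = Polynomial.C (p.coeff i)) :
    IsReducedStandardForm (toR2 t) n := by
  obtain ⟨q, hq⟩ := exists_eq_map_C_add_C_X_mul t
  rw [ht] at hq
  have hq_top : q.natDegree ≤ k - 1 := by
    refine natDegree_le_iff_coeff_eq_zero.mpr fun i hi => ?_
    have := congr(Polynomial.coeff $hq i)
    rw [htop i (by omega), Polynomial.coeff_add, Polynomial.coeff_map, Polynomial.coeff_C_mul,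
      left_eq_add, mul_eq_zero] at this
    exact this.resolve_left X_ne_zero
  refine ⟨(degreeOf_zero_toR2_le (m := n - 1) fun i => ?_).trans_lt ?_, p, toR2 q, ?_, Or.inr ?_⟩
  · have := hlow i
    omega
  · have := hlow 0
    omega
  · rw [hq, map_add, map_mul, toR2_map_C, toR2_C, Polynomial.aeval_X]
  · have := degreeOf_one_toR2_le q
    omega

end Danielewski

open Danielewski Polynomial in
/-- every Danielewski hypersurface is isomorphic to one in reduced
standard form. -/
theorem stmt_12 (n : ℕ) (hn : 1 ≤ n) (Q : R2) (hQ : 2 ≤ (Q0 Q).natDegree) :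
    ∃ Q' : R2, 2 ≤ (Q0 Q').natDegree ∧ IsReducedStandardForm Q' n ∧
      Nonempty (danRing Q n ≃ₐ[ℂ] danRing Q' n) := by
  obtain ⟨f, rfl⟩ := toR2_surjective Q
  rw [Q0_toR2] at hQ
  set p := f.map (evalRingHom 0)
  obtain ⟨k, hk⟩ : ∃ k, p.natDegree = k + 1 := ⟨p.natDegree - 1, by omega⟩
  have hp : p ≠ 0 := fun h => by simp [h] at hQ
  obtain ⟨r, hr, ⟨e₁⟩⟩ := exists_danRingEquiv_map_C_add_C_X_mul (n := n) (by omega) f hp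
  obtain ⟨t, ht, hlow, htop, ⟨e₂⟩⟩ := exists_danRingEquiv_reduced (n := n) (by omega) p hk hr
  refine ⟨toR2 t, ?_, isReducedStandardForm_toR2 (by omega) hk ht hlow htop, ⟨e₁.trans e₂⟩⟩
  rwa [Q0_toR2, ht]
end
end
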